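/- With φ_E(y,x) = ⟨e_{1,y}, P({E}) e_{1,x}⟩ for E ∈ σ(H_Λ), E ≠ Ω, one has Σ_{y ∈ Λ} (1 + g²ρ(y)/(E-Ω)²) |φ_E(y,x)|² = φ_E(x,x) for every x ∈ Λ. -/

import Mathlib

noncomputable section

variable (d : ℕ)

/-- The finite-volume photon–atom Hamiltonian as a matrix on `ℓ²(Λ;ℝ²)`:
`H_Λ(φ,ψ) = (T_Λφ + g√ρ ψ, g√ρ φ + Ωψ)`. -/
def hamMat (Λ : Finset (Fin d → ℤ)) (T : (Fin d → ℤ) → (Fin d → ℤ) → ℝ)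
    (ρ : (Fin d → ℤ) → ℝ) (g Ω : ℝ) :
    Matrix ({a // a ∈ Λ} × Fin 2) ({a // a ∈ Λ} × Fin 2) ℝ :=
  Matrix.of fun p q =>
    if p.2 = 0 then
      (if q.2 = 0 then T p.1 q.1
       else if p.1 = q.1 then g * Real.sqrt (ρ p.1) else 0)
    else
      (if q.2 = 0 then (if p.1 = q.1 then g * Real.sqrt (ρ p.1) else 0)
       else if p.1 = q.1 then Ω else 0)

/-- The orthogonal projection onto the `E`-eigenspace of `H_Λ`, as an operator. -/
def eigProj (Λ : Finset (Fin d → ℤ)) (T : (Fin d → ℤ) → (Fin d → ℤ) → ℝ)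
    (ρ : (Fin d → ℤ) → ℝ) (g Ω E : ℝ) :
    EuclideanSpace ℝ ({a // a ∈ Λ} × Fin 2) →L[ℝ]
      EuclideanSpace ℝ ({a // a ∈ Λ} × Fin 2) :=
  letI K := Module.End.eigenspace (Matrix.toEuclideanLin (hamMat d Λ T ρ g Ω)) E
  K.subtypeL.comp (Submodule.orthogonalProjection K)

/-- `e_{j,x}` basis vectors. -/
def basE (Λ : Finset (Fin d → ℤ)) (j : Fin 2) (x : {a // a ∈ Λ}) :
    EuclideanSpace ℝ ({a // a ∈ Λ} × Fin 2) :=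
  EuclideanSpace.single (x, j) 1

/-!
For an eigenvector `ψ` of `H_Λ` with eigenvalue `E ≠ Ω`, the second row of the eigenvalue
equation gives `ψ(y, 1) = g √ρ(y) ψ(y, 0) / (E - Ω)`, so the weighted sum of `ψ(y, 0) ^ 2` is
`‖ψ‖ ^ 2`. Applied to `ψ = P e_{1,x}` (where `e_{1,x} = basE d Λ 0 x`), this is
`‖P e_{1,x}‖ ^ 2 = ⟪e_{1,x}, P e_{1,x}⟫`, because `P` is a self-adjoint idempotent.
-/

section Hamiltonian

variable {d} {Λ : Finset (Fin d → ℤ)} {T : (Fin d → ℤ) → (Fin d → ℤ) → ℝ}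
  {ρ : (Fin d → ℤ) → ℝ} {g Ω : ℝ}

theorem hamMat_mulVec_apply_one (v : {a // a ∈ Λ} × Fin 2 → ℝ) (y : {a // a ∈ Λ}) :
    (hamMat d Λ T ρ g Ω).mulVec v (y, 1) = g * √(ρ y) * v (y, 0) + Ω * v (y, 1) := by
  simp [hamMat, Matrix.mulVec, dotProduct, Fintype.sum_prod_type, ite_mul, Finset.sum_add_distrib]

theorem hamMat_eigenvector_apply_one {E : ℝ} {v : EuclideanSpace ℝ ({a // a ∈ Λ} × Fin 2)}
    (hv : Matrix.toEuclideanLin (hamMat d Λ T ρ g Ω) v = E • v) (y : {a // a ∈ Λ}) :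
    (E - Ω) * v (y, 1) = g * √(ρ y) * v (y, 0) := by
  have h : (hamMat d Λ T ρ g Ω).mulVec v (y, 1) = E * v (y, 1) :=
    congrFun (congrArg WithLp.ofLp hv) (y, 1)
  rw [hamMat_mulVec_apply_one] at h
  linarith

theorem hamMat_eigenvector_norm_sq (hρ : ∀ a, 0 ≤ ρ a) {E : ℝ} (hE : E ≠ Ω)
    {v : EuclideanSpace ℝ ({a // a ∈ Λ} × Fin 2)}
    (hv : Matrix.toEuclideanLin (hamMat d Λ T ρ g Ω) v = E • v) :
    ∑ y : {a // a ∈ Λ}, (1 + g ^ 2 * ρ y / (E - Ω) ^ 2) * v (y, 0) ^ 2 = ‖v‖ ^ 2 := by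
  rw [EuclideanSpace.real_norm_sq_eq, Fintype.sum_prod_type]
  refine Finset.sum_congr rfl fun y _ => ?_
  have hEΩ : E - Ω ≠ 0 := sub_ne_zero.mpr hE
  have h := hamMat_eigenvector_apply_one hv y
  rw [Fin.sum_univ_two, ← Real.sq_sqrt (hρ y)]
  field_simp
  linear_combination (-((E - Ω) * v (y, 1) + g * √(ρ y) * v (y, 0))) * h

end Hamiltonian

theorem Submodule.real_inner_self_starProjection {E : Type*} [NormedAddCommGroup E]
    [InnerProductSpace ℝ E] (K : Submodule ℝ E) [K.HasOrthogonalProjection] (v : E) :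
    inner ℝ v (K.starProjection v) = ‖K.starProjection v‖ ^ 2 := by
  simpa [real_inner_comm] using K.re_inner_starProjection_eq_normSq v

theorem stmt10 (Λ : Finset (Fin d → ℤ)) (T : (Fin d → ℤ) → (Fin d → ℤ) → ℝ)
    (ρ : (Fin d → ℤ) → ℝ) (hρ : ∀ a, 0 ≤ ρ a)
    (g Ω E : ℝ) (hE : E ≠ Ω)
    (x : {a // a ∈ Λ}) :
    let P := eigProj d Λ T ρ g Ω E
    let φ := fun y x' => inner (𝕜 := ℝ) (basE d Λ 0 y) (P (basE d Λ 0 x'))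
    ∑ y : {a // a ∈ Λ}, (1 + g ^ 2 * ρ y / (E - Ω) ^ 2) * |φ y x| ^ 2
      = φ x x := by
  intro P φ
  set K := Module.End.eigenspace (Matrix.toEuclideanLin (hamMat d Λ T ρ g Ω)) E
  have hP : P = K.starProjection := rfl
  have hφ : ∀ y, φ y x = P (basE d Λ 0 x) (y, 0) := fun y => by
    simp [φ, basE, EuclideanSpace.inner_single_left]
  have hPx : Matrix.toEuclideanLin (hamMat d Λ T ρ g Ω) (P (basE d Λ 0 x))
      = E • P (basE d Λ 0 x) :=
    Module.End.mem_eigenspace_iff.mp (hP ▸ K.starProjection_apply_mem _)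
  calc ∑ y : {a // a ∈ Λ}, (1 + g ^ 2 * ρ y / (E - Ω) ^ 2) * |φ y x| ^ 2
      = ∑ y : {a // a ∈ Λ}, (1 + g ^ 2 * ρ y / (E - Ω) ^ 2) * P (basE d Λ 0 x) (y, 0) ^ 2 := by
        simp only [hφ, sq_abs]
    _ = ‖P (basE d Λ 0 x)‖ ^ 2 := hamMat_eigenvector_norm_sq hρ hE hPx
    _ = φ x x := (K.real_inner_self_starProjection _).symm
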